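/- arXiv:1308.2035 — 5 statements merged into one kernel-verified Lean document; each statement's English description precedes it below -/
import Mathlib

section
/- Let A be a unital (noncommutative) ring, a1, a2 ∈ A, and let t1, t2, ρ, h1, h2 be scalars (in a commutative field k over which A is an algebra) with h1, h2 invertible and ρ = (h1 h2)^{-1}. Define a1(t1) = (1 - t1 a1)^{-1} - h1·1 and a2(t2) = (1 - t2 a2)^{-1} - h2·1, assuming 1 - t1 a1 and 1 - t2 a2 are invertible and that (1 - t1 a1)^{-1} has expectation-value replaced by the formal hypothesis h1 (likewise h2). If furthermore t1 h1 = t2 h2, then (1 - t1 a1)(1 - ρ a1(t1) a2(t2))(1 - t2 a2) = ((h1 + h2 - 1)/(h1 h2)) · (1 - t(a1 + a2)), where t = t1 h1 / (h1 + h2 - 1), assuming h1 + h2 - 1 ≠ 0. -/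
/-!
Put `u₁ = 1 - t₁ a₁`, `u₂ = 1 - t₂ a₂`, `yᵢ = uᵢ⁻¹ - hᵢ`. Then `u₁ y₁ = 1 - h₁ u₁` and
`y₂ u₂ = 1 - h₂ u₂`, so the left-hand side is `u₁ u₂ - (h₁ h₂)⁻¹ (1 - h₁ u₁)(1 - h₂ u₂)`, in which
the `u₁ u₂` terms cancel, leaving `h₂⁻¹ u₁ + h₁⁻¹ u₂ - (h₁ h₂)⁻¹`. This is affine in `a₁, a₂`,
and `t₁ h₁ = t₂ h₂` makes the coefficients of `a₁` and `a₂` agree.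
-/

section

variable {R A : Type*} [Ring A] [SMul R A]

theorem mul_sub_smul_one_of_mul_eq_one [SMulCommClass R A A] {u x : A} (h : R) (hux : u * x = 1) :
    u * (x - h • 1) = 1 - h • u := by
  rw [mul_sub, hux, mul_smul_comm, mul_one]

theorem sub_smul_one_mul_of_mul_eq_one [IsScalarTower R A A] {u x : A} (h : R) (hxu : x * u = 1) :
    (x - h • 1) * u = 1 - h • u := by
  rw [sub_mul, hxu, smul_mul_assoc, one_mul]

end

theorem mul_one_sub_smul_mul_mul {k A : Type*} [Field k] [Ring A] [Algebra k A]
    {u₁ u₂ y₁ y₂ : A} {h₁ h₂ : k} (hh₁ : h₁ ≠ 0) (hh₂ : h₂ ≠ 0)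
    (hy₁ : u₁ * y₁ = 1 - h₁ • u₁) (hy₂ : y₂ * u₂ = 1 - h₂ • u₂) :
    u₁ * (1 - (h₁ * h₂)⁻¹ • (y₁ * y₂)) * u₂ = h₂⁻¹ • u₁ + h₁⁻¹ • u₂ - (h₁ * h₂)⁻¹ • 1 := by
  calc u₁ * (1 - (h₁ * h₂)⁻¹ • (y₁ * y₂)) * u₂
      = u₁ * u₂ - (h₁ * h₂)⁻¹ • ((u₁ * y₁) * (y₂ * u₂)) := by
        simp only [mul_sub, sub_mul, mul_one, mul_smul_comm, smul_mul_assoc, mul_assoc]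
    _ = h₂⁻¹ • u₁ + h₁⁻¹ • u₂ - (h₁ * h₂)⁻¹ • 1 := by
        rw [hy₁, hy₂]
        simp only [mul_sub, sub_mul, mul_one, one_mul, smul_mul_smul_comm]
        match_scalars <;> field_simp
        ring

theorem stmt0_general {k : Type*} [Field k] {A : Type*} [Ring A] [Algebra k A]
    (a1 a2 x1 x2 : A) (t1 t2 h1 h2 ρ t : k)
    (hh1 : h1 ≠ 0) (hh2 : h2 ≠ 0)
    (hx1 : (1 - t1 • a1) * x1 = 1)
    (hx2' : x2 * (1 - t2 • a2) = 1)
    (hρ : ρ = (h1 * h2)⁻¹)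
    (hsum : h1 + h2 - 1 ≠ 0)
    (hth : t1 * h1 = t2 * h2)
    (ht : t = t1 * h1 / (h1 + h2 - 1)) :
    (1 - t1 • a1) * (1 - ρ • ((x1 - h1 • 1) * (x2 - h2 • 1))) * (1 - t2 • a2)
      = ((h1 + h2 - 1) / (h1 * h2)) • (1 - t • (a1 + a2)) := by
  subst hρ ht
  rw [mul_one_sub_smul_mul_mul hh1 hh2 (mul_sub_smul_one_of_mul_eq_one h1 hx1)
    (sub_smul_one_mul_of_mul_eq_one h2 hx2')]
  match_scalars <;> field_simp
  linear_combination hth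

/-- Lemma 2.11(a) of Voiculescu, "Free Probability for Pairs of Faces II". -/
theorem stmt0 {k : Type*} [Field k] {A : Type*} [Ring A] [Algebra k A]
    (a1 a2 x1 x2 : A) (t1 t2 h1 h2 ρ t : k)
    (hh1 : h1 ≠ 0) (hh2 : h2 ≠ 0)
    (hx1 : (1 - t1 • a1) * x1 = 1) (hx1' : x1 * (1 - t1 • a1) = 1)
    (hx2 : (1 - t2 • a2) * x2 = 1) (hx2' : x2 * (1 - t2 • a2) = 1)
    (hρ : ρ = (h1 * h2)⁻¹)
    (hsum : h1 + h2 - 1 ≠ 0)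
    (hth : t1 * h1 = t2 * h2)
    (ht : t = t1 * h1 / (h1 + h2 - 1)) :
    (1 - t1 • a1) * (1 - ρ • ((x1 - h1 • 1) * (x2 - h2 • 1))) * (1 - t2 • a2)
      = ((h1 + h2 - 1) / (h1 * h2)) • (1 - t • (a1 + a2)) :=
  stmt0_general a1 a2 x1 x2 t1 t2 h1 h2 ρ t hh1 hh2 hx1 hx2' hρ hsum hth ht
end

section
/- Let (A, φ) be a noncommutative probability space (unital ℂ-algebra A with unital linear functional φ) and P ∈ A an idempotent with PaP = φ(a)P for all a ∈ A. Suppose ((a_i)_{i∈I}, (b_j)_{j∈J}) satisfies [a_i, b_j] = λ_{ij} P for scalars λ_{ij}. Then for any j1, ..., jq ∈ J, any i1, ..., ip ∈ I, and any k ∈ I: P a_{i1}···a_{ip} b_{j1}···b_{jq} a_k = P a_{i1}···a_{ip} a_k b_{j1}···b_{jq} − Σ_{t=1}^{q} φ(a_{i1}···a_{ip} b_{j1}···b_{j_{t−1}}) λ_{k, j_t} P b_{j_{t+1}}···b_{jq}. -/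
/-!
Moving `a_k` leftwards past `b_{j_q}, …, b_{j_1}` one factor at a time produces, at the step past
`b_{j_t}`, a correction `λ_{k,j_t} b_{j_1}⋯b_{j_{t-1}} P b_{j_{t+1}}⋯b_{j_q}`; this holds in any
algebra. With the prefix `P a_{i_1}⋯a_{i_p}` in front, absorption `P y P = φ(y) P` turns each
correction into a scalar multiple of `P b_{j_{t+1}}⋯b_{j_q}`.
-/

theorem List.prod_ofFn_mul_eq_of_sub_eq_smul {R A : Type*} [CommSemiring R] [Ring A]
    [Algebra R A] (P a : A) {q : ℕ} (f : Fin q → A) (c : Fin q → R)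
    (hcomm : ∀ t, a * f t - f t * a = c t • P) :
    (List.ofFn f).prod * a
      = a * (List.ofFn f).prod
        - ∑ t : Fin q, c t • (((List.ofFn f).take t).prod * P * ((List.ofFn f).drop (t + 1)).prod) := by
  induction q with
  | zero => simp
  | succ n ih =>
    have ih' := ih (fun u => f u.succ) (fun u => c u.succ) (fun u => hcomm u.succ)
    have h0 : f 0 * a = a * f 0 - c 0 • P := by rw [← hcomm 0, sub_sub_cancel]
    simp only [List.ofFn_succ, Fin.sum_univ_succ, List.prod_cons, Fin.val_succ, Fin.val_zero,
      List.take_zero, List.prod_nil, one_mul, List.take_succ_cons, List.drop_succ_cons,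
      List.drop_zero]
    rw [mul_assoc, ih', mul_sub, ← mul_assoc, h0, Finset.mul_sum]
    simp only [sub_mul, smul_mul_assoc, mul_smul_comm, mul_assoc]
    abel

theorem stmt5_general {A : Type*} [Ring A] [Algebra ℂ A] {I J : Type*}
    (φ : A →ₗ[ℂ] ℂ)
    (P : A) (hPaP : ∀ x : A, P * x * P = φ x • P)
    (a : I → A) (b : J → A) (lam : I → J → ℂ)
    (hcomm : ∀ i j, a i * b j - b j * a i = lam i j • P)
    (p q : ℕ) (is : Fin p → I) (js : Fin q → J) (k : I) :
    (P * (List.ofFn fun u => a (is u)).prod * (List.ofFn fun u => b (js u)).prod * a k)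
      = P * (List.ofFn fun u => a (is u)).prod * a k * (List.ofFn fun u => b (js u)).prod
        - ∑ t : Fin q,
            (φ ((List.ofFn fun u => a (is u)).prod
                  * ((List.ofFn fun u => b (js u)).take t.1).prod)
              * lam k (js t)) •
              (P * ((List.ofFn fun u => b (js u)).drop (t.1 + 1)).prod) := by
  set x := (List.ofFn fun u => a (is u)).prod
  rw [mul_assoc _ _ (a k), List.prod_ofFn_mul_eq_of_sub_eq_smul P (a k) _ _ (fun t => hcomm k (js t)),
    mul_sub, Finset.mul_sum, ← mul_assoc]
  congr 1
  refine Finset.sum_congr rfl fun t _ => ?_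
  rw [mul_smul_comm, ← mul_assoc, ← mul_assoc, mul_assoc P x, hPaP, smul_mul_assoc, smul_smul,
    mul_comm]

/-- The key commutation computation in the proof of Proposition 3.7 of Voiculescu's
"Free Probability for Pairs of Faces II": in an implemented noncommutative probability
space `(A, φ, P)`, for a system with rank `≤ 1` commutation `[a_i, b_j] = λ_{ij} P`,
`P a_{i1}⋯a_{ip} b_{j1}⋯b_{jq} a_k
  = P a_{i1}⋯a_{ip} a_k b_{j1}⋯b_{jq}
    − ∑_{t=1}^{q} φ(a_{i1}⋯a_{ip} b_{j1}⋯b_{j_{t−1}}) λ_{k,j_t} P b_{j_{t+1}}⋯b_{jq}`. -/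
theorem stmt5 {A : Type*} [Ring A] [Algebra ℂ A] {I J : Type*}
    (φ : A →ₗ[ℂ] ℂ) (hφ1 : φ 1 = 1)
    (P : A) (hPidem : P * P = P) (hPaP : ∀ x : A, P * x * P = φ x • P)
    (a : I → A) (b : J → A) (lam : I → J → ℂ)
    (hcomm : ∀ i j, a i * b j - b j * a i = lam i j • P)
    (p q : ℕ) (is : Fin p → I) (js : Fin q → J) (k : I) :
    (P * (List.ofFn fun u => a (is u)).prod * (List.ofFn fun u => b (js u)).prod * a k)
      = P * (List.ofFn fun u => a (is u)).prod * a k * (List.ofFn fun u => b (js u)).prod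
        - ∑ t : Fin q,
            (φ ((List.ofFn fun u => a (is u)).prod
                  * ((List.ofFn fun u => b (js u)).take t.1).prod)
              * lam k (js t)) •
              (P * ((List.ofFn fun u => b (js u)).drop (t.1 + 1)).prod) :=
  stmt5_general φ P hPaP a b lam hcomm p q is js k
end

section
/- Let A be a Banach algebra with unit, a1, a2 ∈ A, and let f1(t) = Σ_{n≥0} φ(a1^n) t^n, f2(t) = Σ φ(a2^n) t^n be the moment series (convergent near 0, with f1(0) = f2(0) = 1). Then there exist germs of holomorphic functions t ↦ t1(t), t ↦ t2(t) near 0 with t1(0) = t2(0) = 0, t1'(0) = t2'(0) = 1, such that t1 f1(t1) = t2 f2(t2) and t = t1 f1(t1)/(f1(t1) + f2(t2) − 1) for all t near 0; moreover ρ(t) := (f1(t1(t)) f2(t2(t)))^{-1} → 1 as t → 0, so |ρ(t)| < 2 for t sufficiently close to 0. -/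
/-!
Write `G_j(u) = u f_j(u)`; since `f_j(0) = 1`, both `G_j` have first-order jet `(0,1)` at `0`,
so by the analytic inverse function theorem `G_1 = G_2 ∘ T` near `0` for an analytic `T` with
the same jet. Putting `t_2 = T(t_1)` reduces both equations to `t = ψ(t_1)` with
`ψ(u) = G_1(u) / (f_1(u) + f_2(T u) - 1)`, again of jet `(0,1)`, and `t_1` is the local inverse
of `ψ`. The limit of `ρ` is continuity of `f_1 ∘ t_1` and `f_2 ∘ t_2` at `0`.
-/

open Filter Topology

theorem hasDerivAt_zero_id_mul {𝕜 : Type*} [NontriviallyNormedField 𝕜] {k : 𝕜 → 𝕜}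
    (hk : DifferentiableAt 𝕜 k 0) : HasDerivAt (fun u => u * k u) (k 0) 0 := by
  simpa using (hasDerivAt_id' (0 : 𝕜)).fun_mul hk.hasDerivAt

section

variable {𝕜 : Type*} [NontriviallyNormedField 𝕜] [CompleteSpace 𝕜] [CharZero 𝕜]

theorem AnalyticAt.exists_localInverse {f : 𝕜 → 𝕜} {x y f' : 𝕜} (hf : AnalyticAt 𝕜 f x)
    (hf' : HasDerivAt f f' x) (hf'0 : f' ≠ 0) (hxy : f x = y) :
    ∃ g : 𝕜 → 𝕜, AnalyticAt 𝕜 g y ∧ g y = x ∧ HasDerivAt g f'⁻¹ y ∧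
      (∀ᶠ u in 𝓝 x, g (f u) = u) ∧ ∀ᶠ v in 𝓝 y, f (g v) = v := by
  subst hxy
  rw [← hf'.deriv] at hf'0 ⊢
  have hs := hf.hasStrictDerivAt
  exact ⟨hs.localInverse f _ x hf'0, hf.analyticAt_localInverse hf'0,
    HasStrictFDerivAt.localInverse_apply_image _, (hs.to_localInverse hf'0).hasDerivAt,
    hs.eventually_left_inverse hf'0, hs.eventually_right_inverse hf'0⟩

theorem AnalyticAt.exists_eventually_comp_eq {f g : 𝕜 → 𝕜} {x w f' g' : 𝕜}
    (hf : AnalyticAt 𝕜 f x) (hf' : HasDerivAt f f' x) (hf'0 : f' ≠ 0)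
    (hg : AnalyticAt 𝕜 g w) (hg' : HasDerivAt g g' w) (hgw : g w = f x) :
    ∃ T : 𝕜 → 𝕜, AnalyticAt 𝕜 T w ∧ T w = x ∧ HasDerivAt T (g' / f') w ∧
      ∀ᶠ u in 𝓝 w, f (T u) = g u := by
  obtain ⟨h, hha, hhx, hh', -, hfh⟩ := hf.exists_localInverse hf' hf'0 rfl
  rw [← hgw] at hha hhx hh' hfh
  refine ⟨h ∘ g, hha.comp hg, hhx, by simpa [div_eq_inv_mul] using hh'.comp w hg', ?_⟩
  exact hg.continuousAt.tendsto.eventually hfh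

theorem exists_germs_mul_eq_mul_and_eq_div {f1 f2 : 𝕜 → 𝕜} (hf1 : AnalyticAt 𝕜 f1 0)
    (hf2 : AnalyticAt 𝕜 f2 0) (hf10 : f1 0 = 1) (hf20 : f2 0 = 1) :
    ∃ t1 t2 : 𝕜 → 𝕜, AnalyticAt 𝕜 t1 0 ∧ AnalyticAt 𝕜 t2 0 ∧ t1 0 = 0 ∧ t2 0 = 0 ∧
      HasDerivAt t1 1 0 ∧ HasDerivAt t2 1 0 ∧
      ∀ᶠ t in 𝓝 0, t1 t * f1 (t1 t) = t2 t * f2 (t2 t) ∧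
        t = t1 t * f1 (t1 t) / (f1 (t1 t) + f2 (t2 t) - 1) := by
  have hG1 : HasDerivAt (fun u => u * f1 u) 1 0 :=
    hf10 ▸ hasDerivAt_zero_id_mul hf1.differentiableAt
  have hG2 : HasDerivAt (fun u => u * f2 u) 1 0 :=
    hf20 ▸ hasDerivAt_zero_id_mul hf2.differentiableAt
  obtain ⟨T, hTa, hT0, hT', hG21⟩ := (analyticAt_id.fun_mul hf2).exists_eventually_comp_eq hG2
    one_ne_zero (analyticAt_id.fun_mul hf1) hG1 (by simp)
  set D := fun u => f1 u + f2 (T u) - 1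
  have hDa : AnalyticAt 𝕜 D 0 := (hf1.add ((hT0 ▸ hf2).comp hTa)).sub analyticAt_const
  have hD0 : D 0 = 1 := by simp [D, hf10, hT0, hf20]
  have hk : AnalyticAt 𝕜 (fun u => f1 u / D u) 0 := hf1.div hDa (by simp [hD0])
  have hψ : HasDerivAt (fun u => u * (f1 u / D u)) 1 0 := by
    simpa [hf10, hD0] using hasDerivAt_zero_id_mul hk.differentiableAt
  obtain ⟨τ, hτa, hτ0, hτ', -, hψτ⟩ :=
    (analyticAt_id.fun_mul hk).exists_localInverse hψ one_ne_zero (y := 0) (by simp)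
  refine ⟨τ, T ∘ τ, hτa, (hτ0 ▸ hTa).comp hτa, hτ0, by simp [hτ0, hT0],
    by simpa using hτ', by simpa using hT'.comp_of_eq 0 hτ' hτ0.symm, ?_⟩
  rw [← hτ0] at hG21
  filter_upwards [hψτ, hτa.continuousAt.tendsto.eventually hG21] with t hψ hG
  exact ⟨hG.symm, by simpa [D, mul_div_assoc] using hψ.symm⟩

end

theorem analyticAt_moment {𝕜 A E : Type*} [NontriviallyNormedField 𝕜] [NormedRing A]
    [NormedAlgebra 𝕜 A] [CompleteSpace A] [NormedAddCommGroup E] [NormedSpace 𝕜 E]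
    (φ : A →L[𝕜] E) (a : A) :
    AnalyticAt 𝕜 (fun t : 𝕜 => φ (Ring.inverse (1 - t • a))) 0 := by
  have hinv : AnalyticAt 𝕜 Ring.inverse ((1 : A) - (0 : 𝕜) • a) := by
    simpa using analyticAt_inverse (𝕜 := 𝕜) (1 : Aˣ)
  have hlin : AnalyticAt 𝕜 (fun t : 𝕜 => (1 : A) - t • a) 0 :=
    analyticAt_const.sub (analyticAt_id.smul analyticAt_const)
  exact (φ.analyticAt _).comp (hinv.comp (f := fun t : 𝕜 => (1 : A) - t • a) hlin)

/-- Lemma 2.11(b) of Voiculescu's "Free Probability for Pairs of Faces II": for the moment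
series `f_j(t) = φ((1 − t a_j)⁻¹)` of elements of a unital Banach algebra (so `f_j(0) = 1`),
there exist holomorphic germs `t ↦ t_1(t), t_2(t)` at `0`, with first-order jet `(0,1)`,
such that `t_1 f_1(t_1) = t_2 f_2(t_2)` and `t = t_1 f_1(t_1)/(f_1(t_1) + f_2(t_2) − 1)`
near `0`; moreover `ρ(t) = (f_1(t_1(t)) f_2(t_2(t)))⁻¹ → 1` as `t → 0`, so `|ρ(t)| < 2`
for `t` close to `0`. -/
theorem stmt9 {A : Type*} [NormedRing A] [NormedAlgebra ℂ A] [CompleteSpace A]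
    (φ : A →L[ℂ] ℂ) (hφ1 : φ 1 = 1) (a1 a2 : A)
    (f1 f2 : ℂ → ℂ)
    (hf1 : f1 = fun t => φ (Ring.inverse (1 - t • a1)))
    (hf2 : f2 = fun t => φ (Ring.inverse (1 - t • a2))) :
    ∃ t1 t2 : ℂ → ℂ, AnalyticAt ℂ t1 0 ∧ AnalyticAt ℂ t2 0 ∧
      t1 0 = 0 ∧ t2 0 = 0 ∧ deriv t1 0 = 1 ∧ deriv t2 0 = 1 ∧
      (∀ᶠ t in nhds (0 : ℂ),
        t1 t * f1 (t1 t) = t2 t * f2 (t2 t) ∧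
        t = t1 t * f1 (t1 t) / (f1 (t1 t) + f2 (t2 t) - 1)) ∧
      Tendsto (fun t => (f1 (t1 t) * f2 (t2 t))⁻¹) (nhds 0) (nhds 1) ∧
      (∀ᶠ t in nhds (0 : ℂ), ‖(f1 (t1 t) * f2 (t2 t))⁻¹‖ < 2) := by
  have hm1 : AnalyticAt ℂ f1 0 := hf1 ▸ analyticAt_moment φ a1
  have hm2 : AnalyticAt ℂ f2 0 := hf2 ▸ analyticAt_moment φ a2
  have hm10 : f1 0 = 1 := by simp [hf1, hφ1]
  have hm20 : f2 0 = 1 := by simp [hf2, hφ1]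
  obtain ⟨t1, t2, ht1, ht2, ht10, ht20, ht1', ht2', heq⟩ :=
    exists_germs_mul_eq_mul_and_eq_div hm1 hm2 hm10 hm20
  have hρ : Tendsto (fun t => (f1 (t1 t) * f2 (t2 t))⁻¹) (𝓝 0) (𝓝 1) := by
    have hc : ContinuousAt (fun t => (f1 (t1 t) * f2 (t2 t))⁻¹) 0 :=
      ((hm1.continuousAt.comp_of_eq ht1.continuousAt ht10).mul
        (hm2.continuousAt.comp_of_eq ht2.continuousAt ht20)).inv₀
        (by simp [ht10, ht20, hm10, hm20])
    simpa [ht10, ht20, hm10, hm20] using hc.tendsto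
  exact ⟨t1, t2, ht1, ht2, ht10, ht20, ht1'.deriv, ht2'.deriv, heq, hρ,
    hρ.norm.eventually (gt_mem_nhds (by norm_num))⟩
end

section
/- Let R(z,w) = 1 + z R_a(z) + w R_b(w) − zw/G(K_a(z), K_b(w)) be defined as a formal power series in z, w, where: G(z,w) = Σ_{k,l≥0} m_{k,l} z^{-k-1} w^{-l-1} is the formal two-variable Cauchy series of a family of moments m_{k,l} ∈ ℂ with m_{0,0} = 1, m_{k,0} and m_{0,l} the marginal moments; K_a, K_b are the compositional inverses at ∞ of the one-variable series G_a(z) = Σ m_{k,0} z^{-k-1}, G_b(w) = Σ m_{0,l} w^{-l-1}; and R_a(z) = K_a(z) − 1/z, R_b(w) = K_b(w) − 1/w. Then for each (m,n) with m+n ≥ 1, the coefficient of z^m w^n in R(z,w) is a polynomial (with integer coefficients) in the moments m_{k,l} with 0 ≤ k ≤ m, 0 ≤ l ≤ n, and the coefficient of the 'leading' moment m_{m,n} in this polynomial is 1. -/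
/-! Theorem 2.4, Step 2 (Section 2.16) together with Remark 2.17 of Voiculescu's
"Free Probability for Pairs of Faces II", formalized universally over the polynomial
ring `ℤ[m_{k,l}]` of moments.  The two-variable Cauchy series
`G(z,w) = ∑ m_{k,l} z^{-k-1} w^{-l-1}` equals `z⁻¹w⁻¹ H(z⁻¹, w⁻¹)` with
`H(t,s) = ∑ m_{k,l} tᵏ sˡ`, and the compositional inverses `K_a, K_b` at `∞` of the
marginal series `G_a, G_b` are encoded by their reciprocals `La = 1/K_a`, `Lb = 1/K_b`
(power series with zero constant term and linear coefficient `1`, satisfying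
`La · h_a(La) = z`, i.e. `G_a(K_a(z)) = z`).  Then
`R(z,w) = 1 + zR_a(z) + wR_b(w) − zw/G(K_a(z),K_b(w))
        = (zK_a(z)) + (wK_b(w)) − 1 − (zK_a(z))(wK_b(w))·H(La(z),Lb(w))⁻¹`,
where `zK_a(z) = (La(z)/z)⁻¹`.  Each coefficient of `zᵐwⁿ` (for `m+n ≥ 1`) of `R` is an
integer polynomial in the moments `m_{k,l}` with `k ≤ m`, `l ≤ n`, and the coefficient of
the leading moment `m_{m,n}` in it is `1`. -/

open PowerSeries

noncomputable section

/-- The coefficient ring `ℤ[m_{k,l} : (k,l) ∈ ℕ×ℕ]`. -/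
abbrev MomRing : Type := MvPolynomial (ℕ × ℕ) ℤ

/-- The universal moment `m_{k,l}` (with `m_{0,0} = 1`). -/
def mom (k l : ℕ) : MomRing := if k = 0 ∧ l = 0 then 1 else MvPolynomial.X (k, l)

/-- Coefficientwise composition of power series (valid when `g` has zero constant
coefficient): coefficient of `zⁿ` in `f ∘ g` is `∑_{j ≤ n} (coeff j f)·(coeff n gʲ)`. -/
def psComp (f g : PowerSeries MomRing) : PowerSeries MomRing :=
  PowerSeries.mk fun n =>
    ∑ j ∈ Finset.range (n + 1), coeff j f * coeff n (g ^ j)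

/-- A one-variable power series viewed in `MomRing[[z,w]]`, in the variable `z`. -/
def embZ (f : PowerSeries MomRing) : MvPowerSeries (Fin 2) MomRing :=
  fun d => if d 1 = 0 then coeff (d 0) f else 0

/-- A one-variable power series viewed in `MomRing[[z,w]]`, in the variable `w`. -/
def embW (f : PowerSeries MomRing) : MvPowerSeries (Fin 2) MomRing :=
  fun d => if d 0 = 0 then coeff (d 1) f else 0

/-- `L/z`, for `L` with zero constant coefficient. -/
def shiftDiv (L : PowerSeries MomRing) : PowerSeries MomRing :=
  PowerSeries.mk fun n => coeff (n + 1) L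

/-- The substituted series `H(La(z), Lb(w)) ∈ MomRing[[z,w]]` where
`H(t,s) = ∑ m_{k,l} tᵏ sˡ` (well-defined as `La, Lb` have zero constant term). -/
def Hsub (La Lb : PowerSeries MomRing) : MvPowerSeries (Fin 2) MomRing :=
  fun d => ∑ e0 ∈ Finset.range (d 0 + 1), ∑ e1 ∈ Finset.range (d 1 + 1),
    mom e0 e1 * coeff (d 0) (La ^ e0) * coeff (d 1) (Lb ^ e1)

/-!
Give the moment `m_{k,l}` the weight `(k,l) ∈ ℕ²` and the variables `z, w` the weights `(1,0)`,
`(0,1)`; this is the scaling symmetry `z ↦ λz`, `m_{k,l} ↦ λᵏ m_{k,l}` (and likewise in `w`).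
The equations defining `K_a, K_b` respect it, so `zK_a(z)`, `wK_b(w)`, `H(La, Lb)`, its inverse
and hence `R` have weighted homogeneous coefficients: the coefficient of `zᵐwⁿ` has weight
`(m,n)`, which forces it to involve only the moments `m_{k,l}` with `k ≤ m`, `l ≤ n`.

For the leading moment, evaluate at the dual numbers: `m_{m,n} ↦ ε`, every other moment `↦ 0`.
By homogeneity only the coefficients of degree `0` and `(m,n)` survive, and one computes
`H(La, Lb) ↦ 1 + εzᵐwⁿ`, `zK_a ↦ 1 + εzᵐ` if `n = 0` and `↦ 1` otherwise (symmetrically for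
`wK_b`), so that `R ↦ εzᵐwⁿ` because `ε² = 0`.
-/

section DualEval

variable {σ R : Type*} [CommSemiring R] [DecidableEq σ]

def dualEval (v : σ) : MvPolynomial σ R →+* DualNumber R :=
  MvPolynomial.eval₂Hom (algebraMap R (DualNumber R)) fun u => if u = v then DualNumber.eps else 0

theorem dualEval_X (v u : σ) :
    dualEval v (MvPolynomial.X u : MvPolynomial σ R) = if u = v then DualNumber.eps else 0 :=
  MvPolynomial.eval₂Hom_X' _ _ _

theorem dualEval_apply (v : σ) (p : MvPolynomial σ R) :
    dualEval v p = TrivSqZeroExt.inl (MvPolynomial.coeff 0 p)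
      + TrivSqZeroExt.inr (MvPolynomial.coeff (Finsupp.single v 1) p) := by
  induction p using MvPolynomial.induction_on with
  | C a =>
    have : (0 : σ →₀ ℕ) ≠ Finsupp.single v 1 := (Finsupp.single_ne_zero.mpr one_ne_zero).symm
    simp [dualEval, MvPolynomial.coeff_C, this, TrivSqZeroExt.algebraMap_eq_inl]
  | add p q hp hq =>
    rw [map_add, hp, hq, MvPolynomial.coeff_add, MvPolynomial.coeff_add,
      TrivSqZeroExt.inl_add, TrivSqZeroExt.inr_add]
    abel
  | mul_X p u hp =>
    rw [map_mul, hp, dualEval_X, MvPolynomial.coeff_mul_X', MvPolynomial.coeff_mul_X']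
    by_cases hu : u = v
    · subst hu
      rw [if_pos rfl, Finsupp.support_zero, if_neg (Finset.notMem_empty u), if_pos (by simp),
        tsub_self, add_mul, DualNumber.eps, TrivSqZeroExt.inl_mul_inr, TrivSqZeroExt.inr_mul_inr,
        TrivSqZeroExt.inl_zero, smul_eq_mul, mul_one, add_zero, zero_add]
    · simp [hu]

theorem snd_dualEval (v : σ) (p : MvPolynomial σ R) :
    (dualEval v p).snd = MvPolynomial.coeff (Finsupp.single v 1) p := by
  simp [dualEval_apply]

theorem dualEval_eq_zero_of_isWeightedHomogeneous {M : Type*} [AddCommMonoid M] {w : σ → M}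
    {v : σ} {p : MvPolynomial σ R} {μ : M} (hp : p.IsWeightedHomogeneous w μ) (h0 : μ ≠ 0)
    (hv : μ ≠ w v) : dualEval v p = 0 := by
  rw [dualEval_apply, hp.coeff_eq_zero 0 (by simpa using h0.symm),
    hp.coeff_eq_zero _ (by simpa [Finsupp.weight_single] using hv.symm)]
  simp

end DualEval

section Graded

variable {ι R M : Type*} [CommSemiring R] [AddCommMonoid M] (w : ι → M)

local notation "𝓗" => MvPolynomial.weightedHomogeneousSubmodule R w

theorem mem_supported_of_mem_weightedHomogeneousSubmodule [PartialOrder M]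
    [IsOrderedAddMonoid M] [CanonicallyOrderedAdd M] {p : MvPolynomial ι R} {μ : M}
    (hp : p ∈ 𝓗 μ) : p ∈ MvPolynomial.supported R {u | w u ≤ μ} := by
  rw [MvPolynomial.mem_supported]
  intro u hu
  obtain ⟨d, hd, hud⟩ := (MvPolynomial.mem_vars_iff_mem_support u).mp hu
  rw [← hp (MvPolynomial.mem_support_iff.mp hd)]
  exact Finsupp.le_weight_of_ne_zero' w (Finsupp.mem_support_iff.mp hud)

variable {w}

theorem coeff_one_mem (a : M) (k : ℕ) :
    coeff k (1 : PowerSeries (MvPolynomial ι R)) ∈ 𝓗 (k • a) := by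
  rw [coeff_one]
  split_ifs with hk
  · simpa [hk] using MvPolynomial.isWeightedHomogeneous_one R w
  · exact zero_mem _

theorem coeff_pow_mem_of_forall_le {F : PowerSeries (MvPolynomial ι R)} {a : M} {N : ℕ}
    (hF : ∀ i ≤ N, coeff i F ∈ 𝓗 (i • a)) (l : ℕ) : coeff N (F ^ l) ∈ 𝓗 (N • a) := by
  induction l generalizing N with
  | zero => exact pow_zero F ▸ coeff_one_mem a N
  | succ l ih =>
    rw [pow_succ, coeff_mul]
    refine sum_mem fun ij hij => ?_
    rw [Finset.HasAntidiagonal.mem_antidiagonal] at hij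
    rw [← hij, add_nsmul]
    exact (ih fun i hi => hF i (by omega)).mul (hF ij.2 (by omega))

end Graded

section GradedSubring

variable {ι R M : Type*} [CommRing R] [AddCommMonoid M] (w : ι → M)

local notation "𝓗" => MvPolynomial.weightedHomogeneousSubmodule R w

def gradedSubring {σ : Type*} [DecidableEq σ] (τ : σ → M) :
    Subring (MvPowerSeries σ (MvPolynomial ι R)) where
  carrier := {F | ∀ d, MvPowerSeries.coeff d F ∈ 𝓗 (Finsupp.weight τ d)}
  mul_mem' {F G} hF hG d := by
    rw [MvPowerSeries.coeff_mul]
    refine sum_mem fun de hde => ?_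
    rw [Finset.HasAntidiagonal.mem_antidiagonal] at hde
    rw [← hde, map_add]
    exact (hF de.1).mul (hG de.2)
  one_mem' d := by
    rw [MvPowerSeries.coeff_one]
    split_ifs with hd
    · simpa [hd] using MvPolynomial.isWeightedHomogeneous_one R w
    · exact zero_mem _
  add_mem' hF hG d := by rw [map_add]; exact add_mem (hF d) (hG d)
  zero_mem' d := by rw [map_zero]; exact zero_mem _
  neg_mem' hF d := by rw [map_neg]; exact neg_mem (hF d)

variable {w} in
theorem invOfUnit_mem_gradedSubring {σ : Type*} [DecidableEq σ] {τ : σ → M}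
    {F : MvPowerSeries σ (MvPolynomial ι R)} (hF : F ∈ gradedSubring w τ) :
    MvPowerSeries.invOfUnit F 1 ∈ gradedSubring w τ := by
  intro d
  induction d using WellFoundedLT.induction with
  | _ d ih =>
  rw [MvPowerSeries.coeff_invOfUnit]
  split_ifs with hd
  · simpa [hd] using MvPolynomial.isWeightedHomogeneous_one R w
  · rw [inv_one, Units.val_one, neg_one_mul]
    refine neg_mem (sum_mem fun de hde => ?_)
    split_ifs with hlt
    · rw [Finset.HasAntidiagonal.mem_antidiagonal] at hde
      rw [← hde, map_add]
      exact (hF de.1).mul (ih de.2 hlt)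
    · exact zero_mem _

end GradedSubring

local notation "𝓗" => MvPolynomial.weightedHomogeneousSubmodule ℤ (id : ℕ × ℕ → ℕ × ℕ)

theorem mom_mem (k l : ℕ) : mom k l ∈ 𝓗 (k, l) := by
  unfold mom
  split_ifs with h
  · obtain ⟨rfl, rfl⟩ := h
    exact MvPolynomial.isWeightedHomogeneous_one ℤ id
  · exact MvPolynomial.isWeightedHomogeneous_X ℤ id (k, l)

theorem dualEval_mom_self {k l : ℕ} (h : (k, l) ≠ (0, 0)) :
    dualEval (k, l) (mom k l) = DualNumber.eps := by
  rw [mom, if_neg (by simpa using h), dualEval_X, if_pos rfl]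

/-- `L = 1/K` for `K` the compositional inverse at `∞` of `G(z) = ∑ f_k z^{-k-1}`, whose
moments `f_k` have weight `k • a`. -/
structure IsMarginalInverse (a : ℕ × ℕ) (f L : PowerSeries MomRing) : Prop where
  coeff_zero_moments : coeff 0 f = 1
  coeff_moments_mem : ∀ k, coeff k f ∈ 𝓗 (k • a)
  constantCoeff_eq_zero : constantCoeff L = 0
  mul_psComp : L * psComp f L = X

namespace IsMarginalInverse

variable {a : ℕ × ℕ} {f L : PowerSeries MomRing}

theorem X_mul_shiftDiv (h : IsMarginalInverse a f L) : X * shiftDiv L = L := by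
  have := sub_const_eq_X_mul_shift L
  rw [h.constantCoeff_eq_zero, map_zero, sub_zero] at this
  exact this.symm

theorem coeff_pow (h : IsMarginalInverse a f L) (j k : ℕ) :
    coeff k (L ^ j) = if j ≤ k then coeff (k - j) (shiftDiv L ^ j) else 0 := by
  conv_lhs => rw [← h.X_mul_shiftDiv, mul_pow, coeff_X_pow_mul']

theorem shiftDiv_mul_psComp (h : IsMarginalInverse a f L) : shiftDiv L * psComp f L = 1 :=
  X_mul_cancel (by rw [← mul_assoc, h.X_mul_shiftDiv, h.mul_psComp, mul_one])

theorem coeff_zero_psComp (h : IsMarginalInverse a f L) : coeff 0 (psComp f L) = 1 := by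
  simp [psComp, h.coeff_zero_moments]

theorem coeff_psComp_mem_of_forall_lt (h : IsMarginalInverse a f L) {k : ℕ}
    (hS : ∀ i < k, coeff i (shiftDiv L) ∈ 𝓗 (i • a)) : coeff k (psComp f L) ∈ 𝓗 (k • a) := by
  rw [psComp, coeff_mk]
  refine sum_mem fun j hj => ?_
  rw [Finset.mem_range] at hj
  rcases Nat.eq_zero_or_pos j with rfl | hj0
  · simpa using (h.coeff_moments_mem 0).mul (coeff_one_mem a k)
  rw [h.coeff_pow, if_pos (by omega)]
  have hpow := coeff_pow_mem_of_forall_le (N := k - j) (fun i hi => hS i (by omega)) j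
  have hk : j • a + (k - j) • a = k • a := by rw [← add_nsmul, Nat.add_sub_cancel' (by omega)]
  exact hk ▸ (h.coeff_moments_mem j).mul hpow

theorem coeff_shiftDiv_mem (h : IsMarginalInverse a f L) (k : ℕ) :
    coeff k (shiftDiv L) ∈ 𝓗 (k • a) := by
  induction k using Nat.strong_induction_on with
  | _ k ih =>
  -- `coeff k` of `(L/z) · psComp f L = 1` gives `(L/z)_k` in terms of lower coefficients
  have key := congrArg (coeff k) h.shiftDiv_mul_psComp
  have hmem : (k, 0) ∈ Finset.HasAntidiagonal.antidiagonal k := by simp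
  rw [coeff_mul, ← Finset.add_sum_erase _ _ hmem, h.coeff_zero_psComp, mul_one] at key
  rw [eq_sub_of_add_eq key]
  refine sub_mem (coeff_one_mem a k) (sum_mem fun ij hij => ?_)
  obtain ⟨hne, hij⟩ := Finset.mem_erase.mp hij
  rw [Finset.HasAntidiagonal.mem_antidiagonal] at hij
  have hi : ij.1 < k := by
    by_contra hik
    exact hne (Prod.ext (by omega) (by omega))
  rw [← hij, add_nsmul]
  exact (ih ij.1 hi).mul (h.coeff_psComp_mem_of_forall_lt fun i hi' => ih i (by omega))

theorem coeff_psComp_mem (h : IsMarginalInverse a f L) (k : ℕ) :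
    coeff k (psComp f L) ∈ 𝓗 (k • a) :=
  h.coeff_psComp_mem_of_forall_lt fun i _ => h.coeff_shiftDiv_mem i

theorem coeff_pow_mem (h : IsMarginalInverse a f L) (j k : ℕ) :
    coeff k (L ^ j) ∈ 𝓗 ((k - j) • a) := by
  rw [h.coeff_pow]
  split_ifs
  · exact coeff_pow_mem_of_forall_le (fun i _ => h.coeff_shiftDiv_mem i) j
  · exact zero_mem _

theorem constantCoeff_shiftDiv (h : IsMarginalInverse a f L) :
    constantCoeff (shiftDiv L) = 1 := by
  have key := congrArg constantCoeff h.shiftDiv_mul_psComp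
  rwa [map_mul, map_one, ← coeff_zero_eq_constantCoeff_apply (psComp f L), h.coeff_zero_psComp,
    mul_one] at key

theorem invOfUnit_shiftDiv (h : IsMarginalInverse a f L) :
    invOfUnit (shiftDiv L) 1 = psComp f L := by
  have hinv := mul_invOfUnit (shiftDiv L) 1 (by simp [h.constantCoeff_shiftDiv])
  calc invOfUnit (shiftDiv L) 1 = invOfUnit (shiftDiv L) 1 * (shiftDiv L * psComp f L) := by
        rw [h.shiftDiv_mul_psComp, mul_one]
    _ = psComp f L := by rw [← mul_assoc, mul_comm _ (shiftDiv L), hinv, one_mul]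

theorem dualEval_coeff_pow (h : IsMarginalInverse a f L) (ha : a ≠ 0) {v : ℕ × ℕ} {k : ℕ}
    (hv : ∀ i < k, v ≠ i • a) (j : ℕ) :
    dualEval v (coeff k (L ^ j)) = if j = k then 1 else 0 := by
  rcases Nat.eq_zero_or_pos j with rfl | hj
  · simp [coeff_one, eq_comm]
  rw [h.coeff_pow]
  split_ifs with hjk hjk'
  · subst hjk'
    simp [coeff_zero_eq_constantCoeff_apply, h.constantCoeff_shiftDiv]
  · refine dualEval_eq_zero_of_isWeightedHomogeneous (coeff_pow_mem_of_forall_le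
      (fun i _ => h.coeff_shiftDiv_mem i) j) ?_ (hv _ (by omega)).symm
    exact smul_ne_zero (by omega) ha
  · omega
  · simp

theorem dualEval_coeff_psComp (h : IsMarginalInverse a f L) (ha : a ≠ 0) {v : ℕ × ℕ} {k : ℕ}
    (hv : ∀ i < k, v ≠ i • a) :
    dualEval v (coeff k (psComp f L)) = dualEval v (coeff k f) := by
  simp [psComp, h.dualEval_coeff_pow ha hv]

end IsMarginalInverse

theorem single_add_single_apply_zero (m n : ℕ) :
    (Finsupp.single 0 m + Finsupp.single 1 n : Fin 2 →₀ ℕ) 0 = m := by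
  simp

theorem single_add_single_apply_one (m n : ℕ) :
    (Finsupp.single 0 m + Finsupp.single 1 n : Fin 2 →₀ ℕ) 1 = n := by
  simp

theorem eq_single_add_single_iff {d : Fin 2 →₀ ℕ} {m n : ℕ} :
    d = Finsupp.single 0 m + Finsupp.single 1 n ↔ (d 0, d 1) = (m, n) := by
  constructor
  · rintro rfl
    rw [single_add_single_apply_zero, single_add_single_apply_one]
  · intro h
    simp only [Prod.mk.injEq] at h
    ext i; fin_cases i <;> simp [h.1, h.2]

theorem pair_ne_nsmul_one_zero {m n i : ℕ} (hi : i < m) : (m, n) ≠ i • ((1 : ℕ), (0 : ℕ)) := by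
  intro h
  simp only [Prod.smul_mk, smul_eq_mul, mul_one, Prod.ext_iff] at h
  omega

theorem pair_ne_nsmul_zero_one {m n i : ℕ} (hi : i < n) : (m, n) ≠ i • ((0 : ℕ), (1 : ℕ)) := by
  intro h
  simp only [Prod.smul_mk, smul_eq_mul, mul_one, Prod.ext_iff] at h
  omega

abbrev gradedMomSeries : Subring (MvPowerSeries (Fin 2) MomRing) :=
  gradedSubring (id : ℕ × ℕ → ℕ × ℕ) ![(1, 0), (0, 1)]

theorem mem_gradedMomSeries {F : MvPowerSeries (Fin 2) MomRing} :
    F ∈ gradedMomSeries ↔ ∀ d, MvPowerSeries.coeff d F ∈ 𝓗 (d 0, d 1) := by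
  have hw : ∀ d : Fin 2 →₀ ℕ, Finsupp.weight ![((1 : ℕ), (0 : ℕ)), (0, 1)] d = (d 0, d 1) := by
    intro d
    ext <;> simp [Finsupp.weight_eq_sum, Fin.sum_univ_two]
  simp only [gradedMomSeries, gradedSubring, Subring.mem_mk, hw]
  rfl

theorem map_dualEval_of_mem_gradedMomSeries {F : MvPowerSeries (Fin 2) MomRing}
    (hF : F ∈ gradedMomSeries) {m n : ℕ} (hmn : (m, n) ≠ 0) :
    MvPowerSeries.map (dualEval (m, n)) F =
      MvPowerSeries.C (dualEval (m, n) (MvPowerSeries.constantCoeff F))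
        + MvPowerSeries.monomial (Finsupp.single 0 m + Finsupp.single 1 n)
            (dualEval (m, n)
              (MvPowerSeries.coeff (Finsupp.single 0 m + Finsupp.single 1 n) F)) := by
  refine MvPowerSeries.ext fun d => ?_
  rw [MvPowerSeries.coeff_map, map_add, MvPowerSeries.coeff_C, MvPowerSeries.coeff_monomial]
  by_cases hd0 : d = 0
  · subst hd0
    rw [if_pos rfl, if_neg (fun h => hmn (by simpa using (eq_single_add_single_iff.mp h).symm)),
      add_zero, MvPowerSeries.coeff_zero_eq_constantCoeff_apply]
  by_cases hde : d = Finsupp.single 0 m + Finsupp.single 1 n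
  · rw [if_neg hd0, if_pos hde, zero_add, hde]
  rw [if_neg hd0, if_neg hde, add_zero]
  refine dualEval_eq_zero_of_isWeightedHomogeneous (mem_gradedMomSeries.mp hF d) ?_ ?_
  · intro h
    exact hd0 (by ext i; fin_cases i <;> simp_all)
  · exact fun h => hde (eq_single_add_single_iff.mpr h)

theorem coeff_embZ (f : PowerSeries MomRing) (d : Fin 2 →₀ ℕ) :
    MvPowerSeries.coeff d (embZ f) = if d 1 = 0 then coeff (d 0) f else 0 := rfl

theorem coeff_embW (f : PowerSeries MomRing) (d : Fin 2 →₀ ℕ) :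
    MvPowerSeries.coeff d (embW f) = if d 0 = 0 then coeff (d 1) f else 0 := rfl

theorem constantCoeff_embZ (f : PowerSeries MomRing) :
    MvPowerSeries.constantCoeff (embZ f) = constantCoeff f := by
  rw [← MvPowerSeries.coeff_zero_eq_constantCoeff_apply, coeff_embZ]
  simp

theorem constantCoeff_embW (f : PowerSeries MomRing) :
    MvPowerSeries.constantCoeff (embW f) = constantCoeff f := by
  rw [← MvPowerSeries.coeff_zero_eq_constantCoeff_apply, coeff_embW]
  simp

theorem embZ_mem_gradedMomSeries {P : PowerSeries MomRing}
    (hP : ∀ k, coeff k P ∈ 𝓗 (k • (1, 0))) : embZ P ∈ gradedMomSeries := by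
  refine mem_gradedMomSeries.mpr fun d => ?_
  rw [coeff_embZ]
  split_ifs with h
  · simpa [h] using hP (d 0)
  · exact zero_mem _

theorem embW_mem_gradedMomSeries {Q : PowerSeries MomRing}
    (hQ : ∀ k, coeff k Q ∈ 𝓗 (k • (0, 1))) : embW Q ∈ gradedMomSeries := by
  refine mem_gradedMomSeries.mpr fun d => ?_
  rw [coeff_embW]
  split_ifs with h
  · simpa [h] using hQ (d 1)
  · exact zero_mem _

section Hsub

variable {fa fb La Lb : PowerSeries MomRing}

theorem Hsub_mem_gradedMomSeries (ha : IsMarginalInverse (1, 0) fa La)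
    (hb : IsMarginalInverse (0, 1) fb Lb) : Hsub La Lb ∈ gradedMomSeries := by
  refine mem_gradedMomSeries.mpr fun d => ?_
  change Hsub La Lb d ∈ _
  refine sum_mem fun e0 he0 => sum_mem fun e1 he1 => ?_
  rw [Finset.mem_range] at he0 he1
  have hw : (e0, e1) + (d 0 - e0) • ((1 : ℕ), (0 : ℕ)) + (d 1 - e1) • ((0 : ℕ), (1 : ℕ))
      = (d 0, d 1) := by
    simp only [Prod.smul_mk, smul_eq_mul, mul_one, mul_zero, Prod.mk_add_mk, add_zero,
      Prod.mk.injEq]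
    omega
  exact hw ▸ ((mom_mem e0 e1).mul (ha.coeff_pow_mem e0 (d 0))).mul (hb.coeff_pow_mem e1 (d 1))

theorem constantCoeff_Hsub : MvPowerSeries.constantCoeff (Hsub La Lb) = 1 := by
  change Hsub La Lb 0 = 1
  simp [Hsub, mom]

theorem dualEval_coeff_Hsub (ha : IsMarginalInverse (1, 0) fa La)
    (hb : IsMarginalInverse (0, 1) fb Lb) {m n : ℕ} (hmn : (m, n) ≠ 0) :
    dualEval (m, n) (MvPowerSeries.coeff (Finsupp.single 0 m + Finsupp.single 1 n) (Hsub La Lb))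
      = DualNumber.eps := by
  change dualEval (m, n) (Hsub La Lb _) = _
  simp [Hsub, ha.dualEval_coeff_pow (by simp) fun i => pair_ne_nsmul_one_zero,
    hb.dualEval_coeff_pow (by simp) fun i => pair_ne_nsmul_zero_one, dualEval_mom_self hmn]

end Hsub

def partialRTransform (La Lb : PowerSeries MomRing) : MvPowerSeries (Fin 2) MomRing :=
  embZ (invOfUnit (shiftDiv La) 1) + embW (invOfUnit (shiftDiv Lb) 1) - 1
    - embZ (invOfUnit (shiftDiv La) 1) * embW (invOfUnit (shiftDiv Lb) 1)
      * MvPowerSeries.invOfUnit (Hsub La Lb) 1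

section PartialRTransform

variable {fa fb La Lb : PowerSeries MomRing}

theorem partialRTransform_mem_gradedMomSeries (ha : IsMarginalInverse (1, 0) fa La)
    (hb : IsMarginalInverse (0, 1) fb Lb) : partialRTransform La Lb ∈ gradedMomSeries := by
  have hP := embZ_mem_gradedMomSeries (ha.invOfUnit_shiftDiv ▸ ha.coeff_psComp_mem)
  have hQ := embW_mem_gradedMomSeries (hb.invOfUnit_shiftDiv ▸ hb.coeff_psComp_mem)
  have hH := invOfUnit_mem_gradedSubring (Hsub_mem_gradedMomSeries ha hb)
  exact sub_mem (sub_mem (add_mem hP hQ) (one_mem _)) (mul_mem (mul_mem hP hQ) hH)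

theorem coeff_partialRTransform_mem_supported (ha : IsMarginalInverse (1, 0) fa La)
    (hb : IsMarginalInverse (0, 1) fb Lb) (m n : ℕ) :
    MvPowerSeries.coeff (Finsupp.single 0 m + Finsupp.single 1 n) (partialRTransform La Lb)
      ∈ MvPolynomial.supported ℤ {p : ℕ × ℕ | p.1 ≤ m ∧ p.2 ≤ n} := by
  have hmem := mem_gradedMomSeries.mp (partialRTransform_mem_gradedMomSeries ha hb)
    (Finsupp.single 0 m + Finsupp.single 1 n)
  rw [single_add_single_apply_zero, single_add_single_apply_one] at hmem
  have hset : {u : ℕ × ℕ | id u ≤ (m, n)} = {p | p.1 ≤ m ∧ p.2 ≤ n} := by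
    ext
    simp [Prod.le_def]
  exact hset ▸ mem_supported_of_mem_weightedHomogeneousSubmodule id hmem

theorem map_dualEval_embZ (ha : IsMarginalInverse (1, 0) (mk fun k => mom k 0) La)
    {m n : ℕ} (hmn : (m, n) ≠ 0) :
    MvPowerSeries.map (dualEval (m, n)) (embZ (invOfUnit (shiftDiv La) 1)) =
      1 + MvPowerSeries.monomial (Finsupp.single 0 m + Finsupp.single 1 n)
        (if n = 0 then DualNumber.eps else 0) := by
  rw [map_dualEval_of_mem_gradedMomSeries
    (embZ_mem_gradedMomSeries (ha.invOfUnit_shiftDiv ▸ ha.coeff_psComp_mem)) hmn,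
    constantCoeff_embZ, coeff_embZ, ha.invOfUnit_shiftDiv, ← coeff_zero_eq_constantCoeff_apply,
    ha.coeff_zero_psComp, single_add_single_apply_zero, single_add_single_apply_one,
    map_one, map_one]
  split_ifs with hn
  · subst hn
    rw [ha.dualEval_coeff_psComp (by simp) fun i => pair_ne_nsmul_one_zero, coeff_mk,
      dualEval_mom_self (by simpa using hmn)]
  · rw [map_zero]

theorem map_dualEval_embW (hb : IsMarginalInverse (0, 1) (mk fun k => mom 0 k) Lb)
    {m n : ℕ} (hmn : (m, n) ≠ 0) :
    MvPowerSeries.map (dualEval (m, n)) (embW (invOfUnit (shiftDiv Lb) 1)) =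
      1 + MvPowerSeries.monomial (Finsupp.single 0 m + Finsupp.single 1 n)
        (if m = 0 then DualNumber.eps else 0) := by
  rw [map_dualEval_of_mem_gradedMomSeries
    (embW_mem_gradedMomSeries (hb.invOfUnit_shiftDiv ▸ hb.coeff_psComp_mem)) hmn,
    constantCoeff_embW, coeff_embW, hb.invOfUnit_shiftDiv, ← coeff_zero_eq_constantCoeff_apply,
    hb.coeff_zero_psComp, single_add_single_apply_zero, single_add_single_apply_one,
    map_one, map_one]
  split_ifs with hm
  · subst hm
    rw [hb.dualEval_coeff_psComp (by simp) fun i => pair_ne_nsmul_zero_one, coeff_mk,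
      dualEval_mom_self (by simpa using hmn)]
  · rw [map_zero]

theorem map_dualEval_partialRTransform
    (ha : IsMarginalInverse (1, 0) (mk fun k => mom k 0) La)
    (hb : IsMarginalInverse (0, 1) (mk fun k => mom 0 k) Lb) {m n : ℕ} (hmn : (m, n) ≠ 0) :
    MvPowerSeries.map (dualEval (m, n)) (partialRTransform La Lb) =
      MvPowerSeries.monomial (Finsupp.single 0 m + Finsupp.single 1 n) DualNumber.eps := by
  set E := MvPowerSeries.monomial (R := DualNumber ℤ)
    (Finsupp.single (0 : Fin 2) m + Finsupp.single 1 n) DualNumber.eps with hE_def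
  have hE : E * E = 0 := by
    rw [hE_def, MvPowerSeries.monomial_mul_monomial, DualNumber.eps_mul_eps, map_zero]
  have hH : MvPowerSeries.map (dualEval (m, n)) (Hsub La Lb) = 1 + E := by
    rw [map_dualEval_of_mem_gradedMomSeries (Hsub_mem_gradedMomSeries ha hb) hmn,
      constantCoeff_Hsub, dualEval_coeff_Hsub ha hb hmn, map_one, map_one]
  have hHinv : MvPowerSeries.map (dualEval (m, n)) (MvPowerSeries.invOfUnit (Hsub La Lb) 1)
      = 1 - E := by
    have key := congrArg (MvPowerSeries.map (dualEval (m, n)))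
      (MvPowerSeries.mul_invOfUnit (Hsub La Lb) 1 (by rw [constantCoeff_Hsub, Units.val_one]))
    rw [map_mul, map_one, hH] at key
    linear_combination (1 - E) * key + (MvPowerSeries.map (dualEval (m, n))
      (MvPowerSeries.invOfUnit (Hsub La Lb) 1)) * hE
  rw [partialRTransform, map_sub, map_sub, map_add, map_mul, map_mul, map_one,
    map_dualEval_embZ ha hmn, map_dualEval_embW hb hmn, hHinv]
  split_ifs <;> simp only [← hE_def, map_zero, add_zero]
  · linear_combination (1 + E) * hE
  · linear_combination hE
  · linear_combination hE
  · ring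

theorem coeff_single_coeff_partialRTransform
    (ha : IsMarginalInverse (1, 0) (mk fun k => mom k 0) La)
    (hb : IsMarginalInverse (0, 1) (mk fun k => mom 0 k) Lb) {m n : ℕ} (hmn : (m, n) ≠ 0) :
    MvPolynomial.coeff (Finsupp.single (m, n) 1)
      (MvPowerSeries.coeff (Finsupp.single 0 m + Finsupp.single 1 n) (partialRTransform La Lb))
      = 1 := by
  rw [← snd_dualEval, ← MvPowerSeries.coeff_map, map_dualEval_partialRTransform ha hb hmn,
    MvPowerSeries.coeff_monomial_same, DualNumber.snd_eps]

end PartialRTransform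

theorem isMarginalInverse_fst {La : PowerSeries MomRing} (hLa0 : constantCoeff La = 0)
    (hKa : La * psComp (mk fun k => mom k 0) La = X) :
    IsMarginalInverse (1, 0) (mk fun k => mom k 0) La :=
  ⟨by simp [mom], fun k => by simpa using mom_mem k 0, hLa0, hKa⟩

theorem isMarginalInverse_snd {Lb : PowerSeries MomRing} (hLb0 : constantCoeff Lb = 0)
    (hKb : Lb * psComp (mk fun k => mom 0 k) Lb = X) :
    IsMarginalInverse (0, 1) (mk fun k => mom 0 k) Lb :=
  ⟨by simp [mom], fun k => by simpa using mom_mem 0 k, hLb0, hKb⟩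

theorem stmt10_general
    (La Lb : PowerSeries MomRing)
    (hLa0 : constantCoeff La = 0)
    (hLb0 : constantCoeff Lb = 0)
    (hKa : La * psComp (PowerSeries.mk fun n => mom n 0) La = PowerSeries.X)
    (hKb : Lb * psComp (PowerSeries.mk fun n => mom 0 n) Lb = PowerSeries.X)
    (R : MvPowerSeries (Fin 2) MomRing)
    (hR : R = embZ (PowerSeries.invOfUnit (shiftDiv La) 1)
            + embW (PowerSeries.invOfUnit (shiftDiv Lb) 1) - 1
            - embZ (PowerSeries.invOfUnit (shiftDiv La) 1)
              * embW (PowerSeries.invOfUnit (shiftDiv Lb) 1)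
              * MvPowerSeries.invOfUnit (Hsub La Lb) 1) :
    ∀ m n : ℕ, 1 ≤ m + n →
      (MvPowerSeries.coeff (Finsupp.single 0 m + Finsupp.single 1 n) R
          ∈ MvPolynomial.supported ℤ {p : ℕ × ℕ | p.1 ≤ m ∧ p.2 ≤ n}) ∧
      MvPolynomial.coeff (Finsupp.single (m, n) 1)
          (MvPowerSeries.coeff (Finsupp.single 0 m + Finsupp.single 1 n) R) = 1 := by
  intro m n hmn
  have ha := isMarginalInverse_fst hLa0 hKa
  have hb := isMarginalInverse_snd hLb0 hKb
  rw [show R = partialRTransform La Lb from hR]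
  exact ⟨coeff_partialRTransform_mem_supported ha hb m n,
    coeff_single_coeff_partialRTransform ha hb
      (by simp only [ne_eq, Prod.ext_iff, Prod.fst_zero, Prod.snd_zero, not_and]; omega)⟩

theorem stmt10
    (La Lb : PowerSeries MomRing)
    (hLa0 : constantCoeff La = 0) (hLa1 : coeff 1 La = 1)
    (hLb0 : constantCoeff Lb = 0) (hLb1 : coeff 1 Lb = 1)
    (hKa : La * psComp (PowerSeries.mk fun n => mom n 0) La = PowerSeries.X)
    (hKb : Lb * psComp (PowerSeries.mk fun n => mom 0 n) Lb = PowerSeries.X)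
    (R : MvPowerSeries (Fin 2) MomRing)
    (hR : R = embZ (PowerSeries.invOfUnit (shiftDiv La) 1)
            + embW (PowerSeries.invOfUnit (shiftDiv Lb) 1) - 1
            - embZ (PowerSeries.invOfUnit (shiftDiv La) 1)
              * embW (PowerSeries.invOfUnit (shiftDiv Lb) 1)
              * MvPowerSeries.invOfUnit (Hsub La Lb) 1) :
    ∀ m n : ℕ, 1 ≤ m + n →
      (MvPowerSeries.coeff (Finsupp.single 0 m + Finsupp.single 1 n) R
          ∈ MvPolynomial.supported ℤ {p : ℕ × ℕ | p.1 ≤ m ∧ p.2 ≤ n}) ∧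
      MvPolynomial.coeff (Finsupp.single (m, n) 1)
          (MvPowerSeries.coeff (Finsupp.single 0 m + Finsupp.single 1 n) R) = 1 :=
  stmt10_general La Lb hLa0 hLb0 hKa hKb R hR

end
end

section
/- Let A be a unital algebra over a commutative ring R, let a1, a2 ∈ A, t1, t2, ρ, h1, h2 ∈ R with 1 − t1 a1 and 1 − t2 a2 invertible, and set u = (1 − t1 a1)^{-1} − h1, v = (1 − t2 a2)^{-1} − h2. Then (1 − t1 a1)(1 − ρ u v)(1 − t2 a2) = c0 + c1 a1 + c2 a2 + c3 a1 a2 where c3 = t1 t2 (1 − ρ h1 h2), c0 = 1 − ρ(h1 − 1)(h2 − 1), c1 = −t1(1 + ρ h1 − ρ h1 h2), c2 = −t2(1 + ρ h2 − ρ h1 h2). -/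
set_option maxRecDepth 4000

/-- The expansion computation inside the proof of Lemma 2.11(a) of Voiculescu's paper:
with `u = (1 − t1 a1)⁻¹ − h1`, `v = (1 − t2 a2)⁻¹ − h2`,
`(1 − t1 a1)(1 − ρ u v)(1 − t2 a2) = c0 + c1 a1 + c2 a2 + c3 a1 a2` where
`c3 = t1 t2 (1 − ρ h1 h2)`, `c0 = 1 − ρ(h1 − 1)(h2 − 1)`,
`c1 = −t1(1 + ρ h1 - ρ h1 h2)`, `c2 = −t2(1 + ρ h2 − ρ h1 h2)`. -/
theorem stmt16 {R : Type*} [CommRing R] {A : Type*} [Ring A] [Algebra R A]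
    (a1 a2 x1 x2 : A) (t1 t2 ρ h1 h2 : R)
    (hx1 : (1 - t1 • a1) * x1 = 1) (hx1' : x1 * (1 - t1 • a1) = 1)
    (hx2 : (1 - t2 • a2) * x2 = 1) (hx2' : x2 * (1 - t2 • a2) = 1) :
    (1 - t1 • a1) * (1 - ρ • ((x1 - h1 • 1) * (x2 - h2 • 1))) * (1 - t2 • a2)
      = (1 - ρ * ((h1 - 1) * (h2 - 1))) • (1 : A)
        + (-(t1 * (1 + ρ * h1 - ρ * (h1 * h2)))) • a1
        + (-(t2 * (1 + ρ * h2 - ρ * (h1 * h2)))) • a2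
        + (t1 * t2 * (1 - ρ * (h1 * h2))) • (a1 * a2) := by
  have gen : ∀ (L u v Rr : A), L * (1 - ρ • (u * v)) * Rr
      = L * Rr - ρ • ((L * u) * (v * Rr)) := by
    intro L u v Rr
    simp only [mul_sub, sub_mul, mul_one, mul_smul_comm, smul_mul_assoc, mul_assoc]
  have h1' : (1 - t1 • a1) * (x1 - h1 • 1) = 1 - h1 • (1 - t1 • a1) := by
    rw [mul_sub, hx1, mul_smul_comm, mul_one]
  have h2' : (x2 - h2 • 1) * (1 - t2 • a2) = 1 - h2 • (1 - t2 • a2) := by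
    rw [sub_mul, hx2', smul_mul_assoc, one_mul]
  rw [gen, h1', h2']
  simp only [mul_sub, sub_mul, mul_one, one_mul, mul_smul_comm, smul_mul_assoc,
    smul_smul, smul_sub]
  module
end
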